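/- arXiv:0912.0359 — 6 statements merged into one kernel-verified Lean document; each statement's English description precedes it below -/
import Mathlib

section
/- Assume conditions (1.2) and (2.1), and let u, v be a principal fundamental system of solutions of (r z')' = q z. Then for every x ∈ ℝ, u(x) ∫_{-∞}^x q(t) v(t) dt + v(x) ∫_x^∞ q(t) u(t) dt ≤ 1; equivalently, ∫_ℝ q(t) G(x,t) dt ≤ 1 where G(x,t) is the Green kernel. -/
open MeasureTheory Filter Topology
open scoped ENNReal RealInnerProductSpace

noncomputable section

/-- Conditions (1.2): `r, q` measurable, `r > 0`, `q ≥ 0`, with `1/r` and `q`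
locally Lebesgue integrable on `ℝ`. -/
def Cond12 (r q : ℝ → ℝ) : Prop :=
  Measurable r ∧ Measurable q ∧ (∀ x, 0 < r x) ∧ (∀ x, 0 ≤ q x) ∧
    LocallyIntegrable (fun t => 1 / r t) volume ∧ LocallyIntegrable q volume

/-- Condition (1.3): for every `x`,
`(∫_{x-d}^x dt/r(t)) · (∫_{x-d}^x q(t) dt) → ∞` as `|d| → ∞`. -/
def Cond13 (r q : ℝ → ℝ) : Prop :=
  ∀ x : ℝ, Tendsto (fun d : ℝ => (∫ t in x - d..x, 1 / r t) * (∫ t in x - d..x, q t))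
    (cocompact ℝ) atTop

/-- Condition (2.1): `∫_{-∞}^x q > 0` and `∫_x^∞ q > 0` for every `x`. -/
def Cond21 (q : ℝ → ℝ) : Prop :=
  ∀ x : ℝ, 0 < ∫⁻ t in Set.Iic x, ENNReal.ofReal (q t) ∧
    0 < ∫⁻ t in Set.Ici x, ENNReal.ofReal (q t)

/-- A principal fundamental system of solutions `u, v` (with a.e. derivatives
`u', v'`) of the equation `(r z')' = q z`:  `u, v, r u', r v'` are locally
absolutely continuous (expressed through the integral identities below),
`(r u')' = q u` and `(r v')' = q v` a.e., `u > 0`, `v > 0`, `v' ≥ 0`, `u' ≤ 0`,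
`r (v' u - u' v) ≡ 1`, `v/u → 0` at `-∞`, `u/v → 0` at `+∞`,
`∫_{-∞}^0 dt/(r u²) < ∞` and `∫_0^∞ dt/(r v²) < ∞`. -/
structure PFSS (r q u v u' v' : ℝ → ℝ) : Prop where
  u_pos : ∀ x, 0 < u x
  v_pos : ∀ x, 0 < v x
  u'_nonpos : ∀ x, u' x ≤ 0
  v'_nonneg : ∀ x, 0 ≤ v' x
  u'_intble : ∀ a b : ℝ, IntervalIntegrable u' volume a b
  v'_intble : ∀ a b : ℝ, IntervalIntegrable v' volume a b
  u_deriv : ∀ a b : ℝ, u b - u a = ∫ t in a..b, u' t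
  v_deriv : ∀ a b : ℝ, v b - v a = ∫ t in a..b, v' t
  ru'_deriv : ∀ a b : ℝ, r b * u' b - r a * u' a = ∫ t in a..b, q t * u t
  rv'_deriv : ∀ a b : ℝ, r b * v' b - r a * v' a = ∫ t in a..b, q t * v t
  wronskian : ∀ x, r x * (v' x * u x - u' x * v x) = 1
  ratio_bot : Tendsto (fun x => v x / u x) atBot (𝓝 0)
  ratio_top : Tendsto (fun x => u x / v x) atTop (𝓝 0)
  int_u : ∫⁻ t in Set.Iic (0:ℝ), ENNReal.ofReal (1 / (r t * u t ^ 2)) < ⊤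
  int_v : ∫⁻ t in Set.Ici (0:ℝ), ENNReal.ofReal (1 / (r t * v t ^ 2)) < ⊤

/-- The Green kernel `G(x,t) = u(x) v(t)` for `x ≥ t`, `u(t) v(x)` for `x ≤ t`. -/
def greenKernel (u v : ℝ → ℝ) (x t : ℝ) : ℝ :=
  if t ≤ x then u x * v t else u t * v x

/-- The space `L_p(ℝ)` (with respect to Lebesgue measure). -/
abbrev LpR (p : ℝ≥0∞) : Type := Lp ℝ p (volume : Measure ℝ)

/-- `G` is (a bounded realization on `L_p` of) the Green operator
`(G f)(x) = ∫_ℝ G(x,t) f(t) dt`. -/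
def IsGreenOp (u v : ℝ → ℝ) (p : ℝ≥0∞) [Fact (1 ≤ p)]
    (G : LpR p →L[ℝ] LpR p) : Prop :=
  ∀ f : LpR p,
    (G f : ℝ → ℝ) =ᵐ[volume] fun x => ∫ t, greenKernel u v x t * (f : ℝ → ℝ) t

/-- `d₁` solves `(∫_{x-d}^x dt/r)(∫_{x-d}^x q dt) = 1`, `d₁ > 0`. -/
def IsD1 (r q d₁ : ℝ → ℝ) : Prop :=
  ∀ x : ℝ, 0 < d₁ x ∧
    (∫ t in x - d₁ x..x, 1 / r t) * (∫ t in x - d₁ x..x, q t) = 1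

/-- `d₂` solves `(∫_x^{x+d} dt/r)(∫_x^{x+d} q dt) = 1`, `d₂ > 0`. -/
def IsD2 (r q d₂ : ℝ → ℝ) : Prop :=
  ∀ x : ℝ, 0 < d₂ x ∧
    (∫ t in x..x + d₂ x, 1 / r t) * (∫ t in x..x + d₂ x, q t) = 1

/-- `φ(x) = ∫_{x-d₁(x)}^x dt/r(t)`. -/
def phiF (r d₁ : ℝ → ℝ) (x : ℝ) : ℝ := ∫ t in x - d₁ x..x, 1 / r t

/-- `ψ(x) = ∫_x^{x+d₂(x)} dt/r(t)`. -/
def psiF (r d₂ : ℝ → ℝ) (x : ℝ) : ℝ := ∫ t in x..x + d₂ x, 1 / r t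

/-- `h(x) = φ(x)ψ(x)/(φ(x)+ψ(x))`. -/
def hF (r d₁ d₂ : ℝ → ℝ) (x : ℝ) : ℝ :=
  phiF r d₁ x * psiF r d₂ x / (phiF r d₁ x + psiF r d₂ x)

/-- `d` solves `∫_{x-d(x)}^{x+d(x)} dt/(r(t)h(t)) = 1`, `d > 0`. -/
def IsD (r h d : ℝ → ℝ) : Prop :=
  ∀ x : ℝ, 0 < d x ∧ (∫ t in x - d x..x + d x, 1 / (r t * h t)) = 1

/-- `s` solves `∫_{x-s(x)}^{x+s(x)} dt/(r(t)ρ(t)) = 1`, `s > 0`. -/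
def IsS (r ρ s : ℝ → ℝ) : Prop :=
  ∀ x : ℝ, 0 < s x ∧ (∫ t in x - s x..x + s x, 1 / (r t * ρ t)) = 1


/-- From the proof of Corollary 3.7: assume (1.2) and (2.1) and let `u, v` be
a principal FSS.  Then `∫_ℝ q(t) G(x,t) dt ≤ 1` for every `x`, i.e.
`u(x) ∫_{-∞}^x q v + v(x) ∫_x^∞ q u ≤ 1`. -/
theorem green_q_integral_le_one
    (r q u v u' v' : ℝ → ℝ)
    (h12 : Cond12 r q) (h21 : Cond21 q) (hfss : PFSS r q u v u' v') :
    ∀ x : ℝ,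
      ENNReal.ofReal (u x) * (∫⁻ t in Set.Iic x, ENNReal.ofReal (q t * v t)) +
        ENNReal.ofReal (v x) * (∫⁻ t in Set.Ici x, ENNReal.ofReal (q t * u t)) ≤ 1 := by
  intro x
  obtain ⟨hrm, hqm, hrpos, hqnn, hrint, hqint⟩ := h12
  -- continuity of u and v
  have hu_cont : Continuous u := by
    have : u = fun b => u 0 + ∫ t in (0:ℝ)..b, u' t := by
      funext b; have := hfss.u_deriv 0 b; linarith
    rw [this]
    exact continuous_const.add (intervalIntegral.continuous_primitive hfss.u'_intble 0)
  have hv_cont : Continuous v := by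
    have : v = fun b => v 0 + ∫ t in (0:ℝ)..b, v' t := by
      funext b; have := hfss.v_deriv 0 b; linarith
    rw [this]
    exact continuous_const.add (intervalIntegral.continuous_primitive hfss.v'_intble 0)
  -- integrability of q*v and q*u on compacts
  have hqv_int : ∀ a b : ℝ, IntegrableOn (fun t => q t * v t) (Set.Icc a b) volume :=
    fun a b => (hqint.integrableOn_isCompact isCompact_Icc).mul_continuousOn
      hv_cont.continuousOn isCompact_Icc
  have hqu_int : ∀ a b : ℝ, IntegrableOn (fun t => q t * u t) (Set.Icc a b) volume :=
    fun a b => (hqint.integrableOn_isCompact isCompact_Icc).mul_continuousOn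
      hu_cont.continuousOn isCompact_Icc
  -- bound on Icc a x for the v-integral
  have hIcc_v : ∀ a : ℝ, a ≤ x → ∫⁻ t in Set.Icc a x, ENNReal.ofReal (q t * v t)
      ≤ ENNReal.ofReal (r x * v' x) := by
    intro a ha
    have hnn : 0 ≤ᵐ[volume.restrict (Set.Icc a x)] fun t => q t * v t :=
      Filter.Eventually.of_forall fun t => mul_nonneg (hqnn t) (hfss.v_pos t).le
    rw [← ofReal_integral_eq_lintegral_ofReal (hqv_int a x) hnn]
    apply ENNReal.ofReal_le_ofReal
    have : ∫ t in Set.Icc a x, q t * v t = ∫ t in a..x, q t * v t := by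
      rw [intervalIntegral.integral_of_le ha, ← integral_Icc_eq_integral_Ioc]
    rw [this, ← hfss.rv'_deriv a x]
    have : 0 ≤ r a * v' a := mul_nonneg (hrpos a).le (hfss.v'_nonneg a)
    linarith
  -- bound on Icc x b for the u-integral
  have hIcc_u : ∀ b : ℝ, x ≤ b → ∫⁻ t in Set.Icc x b, ENNReal.ofReal (q t * u t)
      ≤ ENNReal.ofReal (-(r x * u' x)) := by
    intro b hb
    have hnn : 0 ≤ᵐ[volume.restrict (Set.Icc x b)] fun t => q t * u t :=
      Filter.Eventually.of_forall fun t => mul_nonneg (hqnn t) (hfss.u_pos t).le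
    rw [← ofReal_integral_eq_lintegral_ofReal (hqu_int x b) hnn]
    apply ENNReal.ofReal_le_ofReal
    have : ∫ t in Set.Icc x b, q t * u t = ∫ t in x..b, q t * u t := by
      rw [intervalIntegral.integral_of_le hb, ← integral_Icc_eq_integral_Ioc]
    rw [this, ← hfss.ru'_deriv x b]
    have : r b * u' b ≤ 0 := mul_nonpos_of_nonneg_of_nonpos (hrpos b).le (hfss.u'_nonpos b)
    linarith
  -- exhaust Iic x
  have hIic : ∫⁻ t in Set.Iic x, ENNReal.ofReal (q t * v t) ≤ ENNReal.ofReal (r x * v' x) := by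
    have hU : Set.Iic x = ⋃ n : ℕ, Set.Icc (x - n) x := by
      ext t
      simp only [Set.mem_Iic, Set.mem_iUnion, Set.mem_Icc]
      constructor
      · intro ht
        obtain ⟨n, hn⟩ := exists_nat_ge (x - t)
        exact ⟨n, by linarith, ht⟩
      · rintro ⟨n, _, h⟩; exact h
    have hdir : Directed (· ⊆ ·) fun n : ℕ => Set.Icc (x - n) x := fun m n =>
      ⟨max m n, Set.Icc_subset_Icc_left (by
          have : (m : ℝ) ≤ max m n := by exact_mod_cast Nat.le_max_left m n
          linarith),
        Set.Icc_subset_Icc_left (by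
          have : (n : ℝ) ≤ max m n := by exact_mod_cast Nat.le_max_right m n
          linarith)⟩
    rw [hU, setLIntegral_iUnion_of_directed _ hdir]
    exact iSup_le fun n => hIcc_v (x - n) (by linarith [Nat.cast_nonneg (α := ℝ) n])
  -- exhaust Ici x
  have hIci : ∫⁻ t in Set.Ici x, ENNReal.ofReal (q t * u t)
      ≤ ENNReal.ofReal (-(r x * u' x)) := by
    have hU : Set.Ici x = ⋃ n : ℕ, Set.Icc x (x + n) := by
      ext t
      simp only [Set.mem_Ici, Set.mem_iUnion, Set.mem_Icc]
      constructor
      · intro ht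
        obtain ⟨n, hn⟩ := exists_nat_ge (t - x)
        exact ⟨n, ht, by linarith⟩
      · rintro ⟨n, h, _⟩; exact h
    have hdir : Directed (· ⊆ ·) fun n : ℕ => Set.Icc x (x + n) := fun m n =>
      ⟨max m n, Set.Icc_subset_Icc_right (by
          have : (m : ℝ) ≤ max m n := by exact_mod_cast Nat.le_max_left m n
          linarith),
        Set.Icc_subset_Icc_right (by
          have : (n : ℝ) ≤ max m n := by exact_mod_cast Nat.le_max_right m n
          linarith)⟩
    rw [hU, setLIntegral_iUnion_of_directed _ hdir]
    exact iSup_le fun n => hIcc_u (x + n) (by linarith [Nat.cast_nonneg (α := ℝ) n])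
  -- combine
  calc ENNReal.ofReal (u x) * (∫⁻ t in Set.Iic x, ENNReal.ofReal (q t * v t)) +
        ENNReal.ofReal (v x) * (∫⁻ t in Set.Ici x, ENNReal.ofReal (q t * u t))
      ≤ ENNReal.ofReal (u x) * ENNReal.ofReal (r x * v' x) +
        ENNReal.ofReal (v x) * ENNReal.ofReal (-(r x * u' x)) :=
        add_le_add (mul_le_mul_right hIic _) (mul_le_mul_right hIci _)
    _ = ENNReal.ofReal (u x * (r x * v' x) + v x * (-(r x * u' x))) := by
        rw [← ENNReal.ofReal_mul (hfss.u_pos x).le, ← ENNReal.ofReal_mul (hfss.v_pos x).le,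
          ← ENNReal.ofReal_add (mul_nonneg (hfss.u_pos x).le
            (mul_nonneg (hrpos x).le (hfss.v'_nonneg x)))
            (mul_nonneg (hfss.v_pos x).le (by
              have : r x * u' x ≤ 0 :=
                mul_nonpos_of_nonneg_of_nonpos (hrpos x).le (hfss.u'_nonpos x)
              linarith))]
    _ = 1 := by
        have hw := hfss.wronskian x
        have : u x * (r x * v' x) + v x * (-(r x * u' x)) = 1 := by nlinarith [hw]
        rw [this, ENNReal.ofReal_one]
end
end

section
/- Assume conditions (1.2) and (1.3) with r ≡ 1, and let d̃ : ℝ → (0,∞) be a function satisfying d̃(x) · ∫_{x-d̃(x)}^{x+d̃(x)} q(t) dt = 2 for every x ∈ ℝ (such a function exists and is unique). Then Molchanov's condition, namely that for every a ∈ (0,∞) one has ∫_{x-a}^{x+a} q(t) dt → ∞ as |x| → ∞, holds if and only if d̃(x) → 0 as |x| → ∞. -/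
open MeasureTheory Filter Topology
open scoped ENNReal RealInnerProductSpace

noncomputable section

/-- **Lemma 4.8.** Assume (1.2), (1.3) with `r ≡ 1`, and let `d̃ > 0` satisfy
`d̃(x) ∫_{x-d̃(x)}^{x+d̃(x)} q = 2` for every `x`.  Then Molchanov's condition
holds iff `d̃(x) → 0` as `|x| → ∞`. -/
theorem molchanov_iff_dtilde_tendsto_zero
    (q dtil : ℝ → ℝ)
    (h12 : Cond12 (fun _ => 1) q) (h13 : Cond13 (fun _ => 1) q)
    (hdtil : ∀ x : ℝ, 0 < dtil x ∧
      dtil x * ∫ t in x - dtil x..x + dtil x, q t = 2) :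
    (∀ a : ℝ, 0 < a →
        Tendsto (fun x => ∫ t in x - a..x + a, q t) (cocompact ℝ) atTop) ↔
      Tendsto dtil (cocompact ℝ) (𝓝 0) := by
  obtain ⟨-, -, -, hq0, -, hqloc⟩ := h12
  have qInt : ∀ a b : ℝ, IntervalIntegrable q volume a b := fun a b =>
    intervalIntegrable_iff.mpr
      ((hqloc.integrableOn_isCompact isCompact_uIcc).mono_set Set.Ioc_subset_Icc_self)
  have mono : ∀ x (c d : ℝ), 0 < c → c ≤ d →
      (∫ t in x - c..x + c, q t) ≤ ∫ t in x - d..x + d, q t := by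
    intro x c d hc hcd
    apply intervalIntegral.integral_mono_interval (by linarith) (by linarith)
      (by linarith) _ (qInt _ _)
    exact Filter.Eventually.of_forall fun t => hq0 t
  have key : ∀ x, (∫ t in x - dtil x..x + dtil x, q t) = 2 / dtil x := by
    intro x
    obtain ⟨hpos, heq⟩ := hdtil x
    field_simp
    linarith [heq]
  constructor
  · intro hM
    rw [NormedAddCommGroup.tendsto_nhds_zero]
    intro ε hε
    have := (hM ε hε).eventually_gt_atTop (2 / ε)
    filter_upwards [this] with x hx
    rw [Real.norm_eq_abs, abs_of_pos (hdtil x).1]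
    by_contra hle
    push_neg at hle
    have h1 : (∫ t in x - ε..x + ε, q t) ≤ ∫ t in x - dtil x..x + dtil x, q t :=
      mono x ε (dtil x) hε hle
    rw [key x] at h1
    have h2 : 2 / dtil x ≤ 2 / ε :=
      div_le_div_of_nonneg_left (by norm_num) hε hle
    linarith
  · intro h0 a ha
    rw [tendsto_atTop]
    intro M
    set ε := min a (2 / max M 1) with hεdef
    have hMax : (0:ℝ) < max M 1 := lt_of_lt_of_le one_pos (le_max_right _ _)
    have hε : 0 < ε := lt_min ha (by positivity)
    have h0' := NormedAddCommGroup.tendsto_nhds_zero.mp h0 ε hε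
    filter_upwards [h0'] with x hx
    rw [Real.norm_eq_abs, abs_of_pos (hdtil x).1] at hx
    have hda : dtil x ≤ a := le_of_lt (lt_of_lt_of_le hx (min_le_left _ _))
    have h1 : (∫ t in x - dtil x..x + dtil x, q t) ≤ ∫ t in x - a..x + a, q t :=
      mono x (dtil x) a (hdtil x).1 hda
    rw [key x] at h1
    have h2 : max M 1 ≤ 2 / dtil x := by
      rw [le_div_iff₀ (hdtil x).1]
      have : dtil x ≤ 2 / max M 1 := le_of_lt (lt_of_lt_of_le hx (min_le_right _ _))
      calc max M 1 * dtil x ≤ max M 1 * (2 / max M 1) := by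
            exact mul_le_mul_of_nonneg_left this hMax.le
        _ = 2 := by field_simp
    calc M ≤ max M 1 := le_max_left _ _
      _ ≤ 2 / dtil x := h2
      _ ≤ _ := h1
end
end

section
/- Assume conditions (1.2) and (2.1), suppose 1/r ∈ L₁(ℝ), and let u, v be a principal fundamental system of solutions of (r z')' = q z with ρ = u·v. Set τ = max{ (∫_{-∞}^0 dt/r(t))⁻¹, (∫_0^∞ dt/r(t))⁻¹ }. Then for every x ∈ ℝ, ρ(x) ≤ τ · (∫_{-∞}^x dt/r(t)) · (∫_x^∞ dt/r(t)). -/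
open MeasureTheory Filter Topology
open scoped ENNReal RealInnerProductSpace

noncomputable section

section AuxLemmas

variable {r q u v u' v' : ℝ → ℝ}

lemma aux_oner (h12 : Cond12 r q) (hfss : PFSS r q u v u' v') (t : ℝ) :
    1 / r t = v' t * u t - u' t * v t := by
  have hr := h12.2.2.1 t
  rw [div_eq_iff hr.ne']
  linear_combination -hfss.wronskian t

lemma aux_oner_nonneg (h12 : Cond12 r q) (t : ℝ) : 0 ≤ 1 / r t :=
  le_of_lt (one_div_pos.2 (h12.2.2.1 t))

lemma aux_u_anti (hfss : PFSS r q u v u' v') {a b : ℝ} (hab : a ≤ b) : u b ≤ u a := by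
  have h := hfss.u_deriv a b
  have h2 : 0 ≤ ∫ t in a..b, -u' t :=
    intervalIntegral.integral_nonneg hab fun t _ => neg_nonneg.2 (hfss.u'_nonpos t)
  rw [intervalIntegral.integral_neg] at h2
  linarith

lemma aux_v_mono (hfss : PFSS r q u v u' v') {a b : ℝ} (hab : a ≤ b) : v a ≤ v b := by
  have h := hfss.v_deriv a b
  have h2 : 0 ≤ ∫ t in a..b, v' t :=
    intervalIntegral.integral_nonneg hab fun t _ => hfss.v'_nonneg t
  linarith

lemma aux_int_le_Iic (h12 : Cond12 r q)
    (hrL1 : Integrable (fun t => 1 / r t) volume) {a x : ℝ} (hax : a ≤ x) :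
    (∫ t in a..x, 1 / r t) ≤ ∫ t in Set.Iic x, 1 / r t := by
  rw [intervalIntegral.integral_of_le hax]
  exact setIntegral_mono_set hrL1.integrableOn
    (Filter.Eventually.of_forall fun t => aux_oner_nonneg h12 t)
    (Set.Ioc_subset_Iic_self).eventuallyLE

lemma aux_int_le_Ici (h12 : Cond12 r q)
    (hrL1 : Integrable (fun t => 1 / r t) volume) {x b : ℝ} (hxb : x ≤ b) :
    (∫ t in x..b, 1 / r t) ≤ ∫ t in Set.Ici x, 1 / r t := by
  rw [intervalIntegral.integral_of_le hxb]
  exact setIntegral_mono_set hrL1.integrableOn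
    (Filter.Eventually.of_forall fun t => aux_oner_nonneg h12 t)
    ((Set.Ioc_subset_Icc_self.trans Set.Icc_subset_Ici_self)).eventuallyLE

lemma aux_int_le_univ (h12 : Cond12 r q)
    (hrL1 : Integrable (fun t => 1 / r t) volume) {a b : ℝ} (hab : a ≤ b) :
    (∫ t in a..b, 1 / r t) ≤ ∫ t, 1 / r t := by
  rw [intervalIntegral.integral_of_le hab]
  exact setIntegral_le_integral hrL1
    (Filter.Eventually.of_forall fun t => aux_oner_nonneg h12 t)

/-- Key estimate for the left side. -/
lemma keyA (h12 : Cond12 r q) (hrL1 : Integrable (fun t => 1 / r t) volume)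
    (hfss : PFSS r q u v u' v') {a x : ℝ} (hax : a ≤ x) :
    u x * (v x - v a) ≤ ∫ t in a..x, 1 / r t := by
  have h1 : u x * (v x - v a) = ∫ t in a..x, u x * v' t := by
    rw [intervalIntegral.integral_const_mul, ← hfss.v_deriv a x]
  rw [h1]
  refine intervalIntegral.integral_mono_on hax
    ((hfss.v'_intble a x).const_mul _) hrL1.intervalIntegrable fun t ht => ?_
  have h1r : 1 / r t = u t * v' t - u' t * v t := by
    rw [aux_oner h12 hfss t]; ring
  have h2 : u x * v' t ≤ u t * v' t :=
    mul_le_mul_of_nonneg_right (aux_u_anti hfss ht.2) (hfss.v'_nonneg t)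
  have h3 : u' t * v t ≤ 0 :=
    mul_nonpos_of_nonpos_of_nonneg (hfss.u'_nonpos t) (hfss.v_pos t).le
  linarith

/-- Key estimate for the right side. -/
lemma keyB (h12 : Cond12 r q) (hrL1 : Integrable (fun t => 1 / r t) volume)
    (hfss : PFSS r q u v u' v') {x b : ℝ} (hxb : x ≤ b) :
    v x * (u x - u b) ≤ ∫ t in x..b, 1 / r t := by
  have h1 : v x * (u x - u b) = ∫ t in x..b, v x * (-u' t) := by
    rw [intervalIntegral.integral_const_mul, intervalIntegral.integral_neg,
      ← hfss.u_deriv x b]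
    ring
  rw [h1]
  refine intervalIntegral.integral_mono_on hxb
    (((hfss.u'_intble x b).neg).const_mul _) hrL1.intervalIntegrable fun t ht => ?_
  have h1r : 1 / r t = u t * v' t - u' t * v t := by
    rw [aux_oner h12 hfss t]; ring
  have h2 : v x * (-u' t) ≤ v t * (-u' t) :=
    mul_le_mul_of_nonneg_right (aux_v_mono hfss ht.1) (neg_nonneg.2 (hfss.u'_nonpos t))
  have h3 : 0 ≤ u t * v' t :=
    mul_nonneg (hfss.u_pos t).le (hfss.v'_nonneg t)
  linarith

/-- `ρ(x) ≤ ∫_{-∞}^x dt/r`. -/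
lemma lemA (h12 : Cond12 r q) (hrL1 : Integrable (fun t => 1 / r t) volume)
    (hfss : PFSS r q u v u' v') (x : ℝ) :
    u x * v x ≤ ∫ t in Set.Iic x, 1 / r t := by
  refine le_of_forall_pos_le_add fun ε hε => ?_
  have hux := hfss.u_pos x
  have hexists : ∃ a, a ≤ x ∧ v a < ε / u x := by
    by_contra hcon
    push_neg at hcon
    set δ := ε / u x with hδdef
    have hδpos : 0 < δ := div_pos hε hux
    set C := ∫ t, 1 / r t with hCdef
    have hCnn : 0 ≤ C := integral_nonneg fun t => aux_oner_nonneg h12 t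
    set M := u x + C / δ with hMdef
    have hMpos : 0 < M := by
      rw [hMdef]
      have := div_nonneg hCnn hδpos.le
      linarith
    clear_value δ C M
    have hbound : ∀ a, a ≤ x → u a ≤ M := by
      intro a ha
      have key : δ * (u a - u x) ≤ ∫ t in a..x, 1 / r t := by
        have h1 : δ * (u a - u x) = ∫ t in a..x, δ * (-u' t) := by
          rw [intervalIntegral.integral_const_mul, intervalIntegral.integral_neg,
            ← hfss.u_deriv a x]
          ring
        rw [h1]
        refine intervalIntegral.integral_mono_on ha
          (((hfss.u'_intble a x).neg).const_mul _) hrL1.intervalIntegrable fun t ht => ?_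
        have h1r : 1 / r t = u t * v' t - u' t * v t := by
          rw [aux_oner h12 hfss t]; ring
        have h2 : δ * (-u' t) ≤ v t * (-u' t) :=
          mul_le_mul_of_nonneg_right (hcon t ht.2) (neg_nonneg.2 (hfss.u'_nonpos t))
        have h3 : 0 ≤ u t * v' t := mul_nonneg (hfss.u_pos t).le (hfss.v'_nonneg t)
        linarith
      have key2 : δ * (u a - u x) ≤ C := by
        rw [hCdef]; exact key.trans (aux_int_le_univ h12 hrL1 ha)
      have h4 : u a - u x ≤ C / δ := (le_div_iff₀' hδpos).2 key2
      rw [hMdef]; linarith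
    have hratio : ∀ a, a ≤ x → δ / M ≤ v a / u a := fun a ha =>
      div_le_div₀ (hfss.v_pos a).le (hcon a ha) (hfss.u_pos a) (hbound a ha)
    have hev := hfss.ratio_bot.eventually_lt_const (div_pos hδpos hMpos)
    obtain ⟨a, ha1, ha2⟩ := ((eventually_le_atBot x).and hev).exists
    exact absurd ha2 (not_lt.2 (hratio a ha1))
  obtain ⟨a, hax, hva⟩ := hexists
  have h1 := (keyA h12 hrL1 hfss hax).trans (aux_int_le_Iic h12 hrL1 hax)
  have h2 : u x * v a ≤ ε := by
    have := mul_lt_mul_of_pos_left hva hux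
    rw [mul_div_cancel₀ _ hux.ne'] at this
    exact this.le
  nlinarith [h1, h2]

/-- `ρ(x) ≤ ∫_x^∞ dt/r`. -/
lemma lemB (h12 : Cond12 r q) (hrL1 : Integrable (fun t => 1 / r t) volume)
    (hfss : PFSS r q u v u' v') (x : ℝ) :
    u x * v x ≤ ∫ t in Set.Ici x, 1 / r t := by
  refine le_of_forall_pos_le_add fun ε hε => ?_
  have hvx := hfss.v_pos x
  have hexists : ∃ b, x ≤ b ∧ u b < ε / v x := by
    by_contra hcon
    push_neg at hcon
    set δ := ε / v x with hδdef
    have hδpos : 0 < δ := div_pos hε hvx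
    set C := ∫ t, 1 / r t with hCdef
    have hCnn : 0 ≤ C := integral_nonneg fun t => aux_oner_nonneg h12 t
    set M := v x + C / δ with hMdef
    have hMpos : 0 < M := by
      rw [hMdef]
      have := div_nonneg hCnn hδpos.le
      linarith
    clear_value δ C M
    have hbound : ∀ b, x ≤ b → v b ≤ M := by
      intro b hb
      have key : δ * (v b - v x) ≤ ∫ t in x..b, 1 / r t := by
        have h1 : δ * (v b - v x) = ∫ t in x..b, δ * v' t := by
          rw [intervalIntegral.integral_const_mul, ← hfss.v_deriv x b]
        rw [h1]
        refine intervalIntegral.integral_mono_on hb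
          ((hfss.v'_intble x b).const_mul _) hrL1.intervalIntegrable fun t ht => ?_
        have h1r : 1 / r t = u t * v' t - u' t * v t := by
          rw [aux_oner h12 hfss t]; ring
        have h2 : δ * v' t ≤ u t * v' t :=
          mul_le_mul_of_nonneg_right (hcon t ht.1) (hfss.v'_nonneg t)
        have h3 : u' t * v t ≤ 0 :=
          mul_nonpos_of_nonpos_of_nonneg (hfss.u'_nonpos t) (hfss.v_pos t).le
        linarith
      have key2 : δ * (v b - v x) ≤ C := by
        rw [hCdef]; exact key.trans (aux_int_le_univ h12 hrL1 hb)
      have h4 : v b - v x ≤ C / δ := (le_div_iff₀' hδpos).2 key2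
      rw [hMdef]; linarith
    have hratio : ∀ b, x ≤ b → δ / M ≤ u b / v b := fun b hb =>
      div_le_div₀ (hfss.u_pos b).le (hcon b hb) (hfss.v_pos b) (hbound b hb)
    have hev := hfss.ratio_top.eventually_lt_const (div_pos hδpos hMpos)
    obtain ⟨b, hb1, hb2⟩ := ((eventually_ge_atTop x).and hev).exists
    exact absurd hb2 (not_lt.2 (hratio b hb1))
  obtain ⟨b, hxb, hub⟩ := hexists
  have h1 := (keyB h12 hrL1 hfss hxb).trans (aux_int_le_Ici h12 hrL1 hxb)
  have h2 : v x * u b ≤ ε := by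
    have := mul_lt_mul_of_pos_left hub hvx
    rw [mul_div_cancel₀ _ hvx.ne'] at this
    exact this.le
  nlinarith [h1, h2]

end AuxLemmas


/-- **Lemma 4.9.** Assume (1.2), (2.1) and `1/r ∈ L₁(ℝ)`, and let `u, v` be a
principal FSS with `ρ = u·v`.  With
`τ = max{(∫_{-∞}^0 dt/r)⁻¹, (∫_0^∞ dt/r)⁻¹}` one has
`ρ(x) ≤ τ (∫_{-∞}^x dt/r)(∫_x^∞ dt/r)` for every `x`. -/
theorem rho_le_tau_mul
    (r q u v u' v' : ℝ → ℝ)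
    (h12 : Cond12 r q) (h21 : Cond21 q)
    (hrL1 : Integrable (fun t => 1 / r t) volume)
    (hfss : PFSS r q u v u' v') :
    ∀ x : ℝ, u x * v x ≤
      max (∫ t in Set.Iic (0:ℝ), 1 / r t)⁻¹ (∫ t in Set.Ici (0:ℝ), 1 / r t)⁻¹ *
        (∫ t in Set.Iic x, 1 / r t) * ∫ t in Set.Ici x, 1 / r t := by
  intro x
  set A := ∫ t in Set.Iic (0:ℝ), 1 / r t with hAdef
  set B := ∫ t in Set.Ici (0:ℝ), 1 / r t with hBdef
  set τ := max A⁻¹ B⁻¹ with hτdef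
  have hsupp : Function.support (fun t => 1 / r t) = Set.univ := by
    ext t
    simp only [Function.mem_support, Set.mem_univ, iff_true]
    exact one_div_ne_zero (h12.2.2.1 t).ne'
  have hApos : 0 < A := by
    rw [hAdef, setIntegral_pos_iff_support_of_nonneg_ae
      (Filter.Eventually.of_forall fun t => aux_oner_nonneg h12 t) hrL1.integrableOn]
    rw [hsupp, Set.univ_inter, Real.volume_Iic]
    exact ENNReal.zero_lt_top
  have hBpos : 0 < B := by
    rw [hBdef, setIntegral_pos_iff_support_of_nonneg_ae
      (Filter.Eventually.of_forall fun t => aux_oner_nonneg h12 t) hrL1.integrableOn]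
    rw [hsupp, Set.univ_inter, Real.volume_Ici]
    exact ENNReal.zero_lt_top
  have hτnn : 0 ≤ τ := le_trans (inv_nonneg.2 hApos.le) (le_max_left _ _)
  have hI1nn : 0 ≤ ∫ t in Set.Iic x, 1 / r t :=
    setIntegral_nonneg measurableSet_Iic fun t _ => aux_oner_nonneg h12 t
  have hI2nn : 0 ≤ ∫ t in Set.Ici x, 1 / r t :=
    setIntegral_nonneg measurableSet_Ici fun t _ => aux_oner_nonneg h12 t
  rcases le_total x 0 with hx | hx
  · -- x ≤ 0 : use B and lemA
    have hBle : B ≤ ∫ t in Set.Ici x, 1 / r t :=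
      setIntegral_mono_set hrL1.integrableOn
        (Filter.Eventually.of_forall fun t => aux_oner_nonneg h12 t)
        (Set.Ici_subset_Ici.2 hx).eventuallyLE
    have h1 : (1:ℝ) ≤ τ * ∫ t in Set.Ici x, 1 / r t := by
      calc (1:ℝ) = B⁻¹ * B := (inv_mul_cancel₀ hBpos.ne').symm
      _ ≤ τ * ∫ t in Set.Ici x, 1 / r t :=
          mul_le_mul (le_max_right _ _) hBle hBpos.le hτnn
    calc u x * v x ≤ ∫ t in Set.Iic x, 1 / r t := lemA h12 hrL1 hfss x
    _ ≤ (τ * ∫ t in Set.Ici x, 1 / r t) * ∫ t in Set.Iic x, 1 / r t :=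
        le_mul_of_one_le_left hI1nn h1
    _ = τ * (∫ t in Set.Iic x, 1 / r t) * ∫ t in Set.Ici x, 1 / r t := by ring
  · -- 0 ≤ x : use A and lemB
    have hAle : A ≤ ∫ t in Set.Iic x, 1 / r t :=
      setIntegral_mono_set hrL1.integrableOn
        (Filter.Eventually.of_forall fun t => aux_oner_nonneg h12 t)
        (Set.Iic_subset_Iic.2 hx).eventuallyLE
    have h1 : (1:ℝ) ≤ τ * ∫ t in Set.Iic x, 1 / r t := by
      calc (1:ℝ) = A⁻¹ * A := (inv_mul_cancel₀ hApos.ne').symm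
      _ ≤ τ * ∫ t in Set.Iic x, 1 / r t :=
          mul_le_mul (le_max_left _ _) hAle hApos.le hτnn
    calc u x * v x ≤ ∫ t in Set.Ici x, 1 / r t := lemB h12 hrL1 hfss x
    _ ≤ (τ * ∫ t in Set.Iic x, 1 / r t) * ∫ t in Set.Ici x, 1 / r t :=
        le_mul_of_one_le_left hI2nn h1
    _ = τ * (∫ t in Set.Iic x, 1 / r t) * ∫ t in Set.Ici x, 1 / r t := by ring
end
end

section
/- Assume conditions (1.2) and (2.1), suppose ∫_{-∞}^0 dt/r(t) = ∫_0^∞ dt/r(t) = ∞, let u, v be a principal fundamental system of solutions of (r z')' = q z, and assume that for some p ∈ (1,∞) the Green operator G is bounded on L_p(ℝ). Then v(x) → 0 as x → −∞ and u(x) → 0 as x → +∞. -/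
open MeasureTheory Filter Topology
open scoped ENNReal RealInnerProductSpace

noncomputable section

/-!
Apply `G` to the indicator `f` of `(0, 1]`. Since `G(x, t)` splits as `u(x) v(t)` or `u(t) v(x)`,
`G f = (∫₀¹ u) · v` on `(-∞, 0]` and `G f = (∫₀¹ v) · u` on `[1, ∞)`, so `v` and `u` are
`p`-integrable on half-lines. They are monotone and positive, hence converge there to their
infimum, and a function bounded below by a positive constant on a half-line is not in `L_p`
for `p < ∞`; so both infima vanish.
-/

open Set

theorem MeasureTheory.MemLp.nonpos_of_ae_le_norm {α E : Type*} [MeasurableSpace α]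
    [NormedAddCommGroup E] {μ : Measure α} {p : ℝ≥0∞} {g : α → E} {c : ℝ}
    (hg : MemLp g p μ) (hp0 : p ≠ 0) (hp : p ≠ ∞) (hμ : μ univ = ∞)
    (hle : ∀ᵐ x ∂μ, c ≤ ‖g x‖) : c ≤ 0 := by
  by_contra! hc
  have hfin := hg.meas_ge_lt_top hp0 hp (ε := c.toNNReal) (by simpa using hc)
  refine hfin.ne (top_le_iff.mp (hμ ▸ measure_mono_ae ?_))
  filter_upwards [hle] with x hx _
  exact Real.toNNReal_le_iff_le_coe.mpr hx

theorem Antitone.tendsto_atTop_zero_of_memLp {g : ℝ → ℝ} (hg : Antitone g) (hg0 : ∀ x, 0 ≤ g x)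
    {p : ℝ≥0∞} (hp0 : p ≠ 0) (hp : p ≠ ∞) {a : ℝ} (hmem : MemLp g p (volume.restrict (Ici a))) :
    Tendsto g atTop (𝓝 0) := by
  have hinf : ⨅ x, g x = 0 := by
    refine le_antisymm (hmem.nonpos_of_ae_le_norm hp0 hp (by simp) (ae_of_all _ fun x => ?_))
      (le_ciInf hg0)
    exact (ciInf_le ⟨0, forall_mem_range.2 hg0⟩ x).trans (le_abs_self _)
  exact hinf ▸ tendsto_atTop_ciInf hg ⟨0, forall_mem_range.2 hg0⟩

theorem Monotone.tendsto_atBot_zero_of_memLp {g : ℝ → ℝ} (hg : Monotone g) (hg0 : ∀ x, 0 ≤ g x)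
    {p : ℝ≥0∞} (hp0 : p ≠ 0) (hp : p ≠ ∞) {a : ℝ} (hmem : MemLp g p (volume.restrict (Iic a))) :
    Tendsto g atBot (𝓝 0) := by
  have hinf : ⨅ x, g x = 0 := by
    refine le_antisymm (hmem.nonpos_of_ae_le_norm hp0 hp (by simp) (ae_of_all _ fun x => ?_))
      (le_ciInf hg0)
    exact (ciInf_le ⟨0, forall_mem_range.2 hg0⟩ x).trans (le_abs_self _)
  exact hinf ▸ tendsto_atBot_ciInf hg ⟨0, forall_mem_range.2 hg0⟩

theorem setIntegral_Ioc_pos {f : ℝ → ℝ} {a b : ℝ} (hf : IntervalIntegrable f volume a b)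
    (hpos : ∀ x, 0 < f x) (hab : a < b) : 0 < ∫ t in Ioc a b, f t := by
  rw [← intervalIntegral.integral_of_le hab.le]
  exact intervalIntegral.intervalIntegral_pos_of_pos_on hf (fun x _ => hpos x) hab

namespace PFSS

variable {r q u v u' v' : ℝ → ℝ}

theorem antitone_u (h : PFSS r q u v u' v') : Antitone u := by
  intro a b hab
  have : ∫ t in a..b, u' t ≤ 0 := by
    rw [intervalIntegral.integral_of_le hab]
    exact integral_nonpos fun x => h.u'_nonpos x
  linarith [h.u_deriv a b]

theorem monotone_v (h : PFSS r q u v u' v') : Monotone v := by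
  intro a b hab
  have : 0 ≤ ∫ t in a..b, v' t := intervalIntegral.integral_nonneg hab fun x _ => h.v'_nonneg x
  linarith [h.v_deriv a b]

end PFSS

section GreenKernel

variable {u v : ℝ → ℝ} {s : Set ℝ} {x : ℝ}

theorem setIntegral_greenKernel_of_subset_Iic (hms : MeasurableSet s) (hs : s ⊆ Iic x) :
    ∫ t in s, greenKernel u v x t = u x * ∫ t in s, v t := by
  rw [← integral_const_mul]
  exact setIntegral_congr_fun hms fun t ht => if_pos (hs ht)

theorem setIntegral_greenKernel_of_subset_Ioi (hms : MeasurableSet s) (hs : s ⊆ Ioi x) :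
    ∫ t in s, greenKernel u v x t = (∫ t in s, u t) * v x := by
  rw [← integral_mul_const]
  exact setIntegral_congr_fun hms fun t ht => if_neg (not_le.2 (hs ht))

theorem IsGreenOp.memLp_restrict {p : ℝ≥0∞} [Fact (1 ≤ p)] {G : LpR p →L[ℝ] LpR p}
    (hG : IsGreenOp u v p G) (hs : MeasurableSet s) (hμs : volume s ≠ ∞) {A : Set ℝ}
    (hA : MeasurableSet A) {F : ℝ → ℝ} (hF : ∀ x ∈ A, ∫ t in s, greenKernel u v x t = F x) :
    MemLp F p (volume.restrict A) := by
  have hGf : ∀ x, ∫ t, greenKernel u v x t * indicatorConstLp p hs hμs (1 : ℝ) t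
      = ∫ t in s, greenKernel u v x t := fun x => by
    rw [← integral_indicator hs]
    refine integral_congr_ae ?_
    filter_upwards [indicatorConstLp_coeFn (p := p) (μ := volume) (hs := hs) (hμs := hμs)
      (c := (1 : ℝ))] with t ht
    rw [ht]
    by_cases hts : t ∈ s <;> simp [hts]
  refine (Lp.memLp (G (indicatorConstLp p hs hμs 1))).restrict A |>.ae_eq ?_
  filter_upwards [ae_restrict_le (hG _), ae_restrict_mem hA] with x hx hxA
  rw [hx, hGf, hF x hxA]

end GreenKernel

theorem uv_tendsto_zero_of_green_bounded_general
    (r q u v u' v' : ℝ → ℝ) (p : ℝ≥0∞) (hp2 : p ≠ ⊤)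
    [Fact (1 ≤ p)]
    (hfss : PFSS r q u v u' v')
    (G : LpR p →L[ℝ] LpR p) (hG : IsGreenOp u v p G) :
    Tendsto v atBot (𝓝 0) ∧ Tendsto u atTop (𝓝 0) := by
  have hp0 : p ≠ 0 := (zero_lt_one.trans_le Fact.out).ne'
  have hμ : volume (Ioc (0:ℝ) 1) ≠ ∞ := by simp
  have hu := hfss.antitone_u
  have hv := hfss.monotone_v
  have hIu := setIntegral_Ioc_pos hu.intervalIntegrable hfss.u_pos zero_lt_one
  have hIv := setIntegral_Ioc_pos hv.intervalIntegrable hfss.v_pos zero_lt_one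
  constructor
  · have hmem : MemLp (fun x => (∫ t in Ioc (0:ℝ) 1, u t) * v x) p (volume.restrict (Iic 0)) :=
      hG.memLp_restrict measurableSet_Ioc hμ measurableSet_Iic fun x hx =>
        setIntegral_greenKernel_of_subset_Ioi measurableSet_Ioc fun t ht => hx.trans_lt ht.1
    refine hv.tendsto_atBot_zero_of_memLp (a := 0) (fun x => (hfss.v_pos x).le) hp0 hp2 ?_
    simpa [hIu.ne'] using hmem.const_mul (∫ t in Ioc (0:ℝ) 1, u t)⁻¹
  · have hmem : MemLp (fun x => u x * ∫ t in Ioc (0:ℝ) 1, v t) p (volume.restrict (Ici 1)) :=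
      hG.memLp_restrict measurableSet_Ioc hμ measurableSet_Ici fun x hx =>
        setIntegral_greenKernel_of_subset_Iic measurableSet_Ioc fun t ht => ht.2.trans hx
    refine hu.tendsto_atTop_zero_of_memLp (a := 1) (fun x => (hfss.u_pos x).le) hp0 hp2 ?_
    simpa [hIv.ne'] using hmem.mul_const (∫ t in Ioc (0:ℝ) 1, v t)⁻¹

/-- **Theorem 5.6.** Assume (1.2), (2.1) and
`∫_{-∞}^0 dt/r = ∫_0^∞ dt/r = ∞`, let `u, v` be a principal FSS, and assume
the Green operator is bounded on `L_p(ℝ)` for some `p ∈ (1,∞)`.  Then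
`v(x) → 0` as `x → -∞` and `u(x) → 0` as `x → +∞`. -/
theorem uv_tendsto_zero_of_green_bounded
    (r q u v u' v' : ℝ → ℝ) (p : ℝ≥0∞) (hp1 : 1 < p) (hp2 : p ≠ ⊤)
    [Fact (1 ≤ p)]
    (h12 : Cond12 r q) (h21 : Cond21 q)
    (hIic : (∫⁻ t in Set.Iic (0:ℝ), ENNReal.ofReal (1 / r t)) = ⊤)
    (hIci : (∫⁻ t in Set.Ici (0:ℝ), ENNReal.ofReal (1 / r t)) = ⊤)
    (hfss : PFSS r q u v u' v')
    (G : LpR p →L[ℝ] LpR p) (hG : IsGreenOp u v p G) :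
    Tendsto v atBot (𝓝 0) ∧ Tendsto u atTop (𝓝 0) :=
  uv_tendsto_zero_of_green_bounded_general r q u v u' v' p hp2 hfss G hG
end
end

section
/- Let g : ℝ → [0,∞] be measurable, positive almost everywhere, locally Lebesgue integrable, and satisfy ∫_{-∞}^0 g(t) dt = ∫_0^∞ g(t) dt = ∞. Then for every x ∈ ℝ the equation ∫_{x-s}^{x+s} g(t) dt = 1 has a unique solution s(x) ∈ (0,∞), and the resulting function s : ℝ → (0,∞) satisfies |s(x+t) − s(x)| ≤ |t| whenever |t| ≤ s(x); in particular, s is continuous on ℝ. -/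
open MeasureTheory Filter Topology
open scoped ENNReal RealInnerProductSpace

noncomputable section

/-!
Put `μ = g · dx`: a locally finite measure without atoms that charges every open interval and
has infinite total mass. Hence `r ↦ μ (x - r, x + r]` is continuous and strictly increasing
from `0` to `∞` on `[0, ∞)`, so it takes the value `1` exactly once, at `s x`. If
`s y > s x + |y - x|`, the interval of radius `s x + |y - x|` about `y` contains the one of
radius `s x` about `x` but has mass `< 1`; so `s` is `1`-Lipschitz.
-/

open Set

namespace MeasureTheory

variable {μ : Measure ℝ}

theorem strictMonoOn_measure_Ioc_sub_add [IsLocallyFiniteMeasure μ]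
    [Measure.IsOpenPosMeasure μ] (x : ℝ) :
    StrictMonoOn (fun r => μ (Ioc (x - r) (x + r))) (Ici 0) := by
  intro a ha b _ hab
  have hsub : Ioc (x - a) (x + a) ∪ Ioo (x + a) (x + b) ⊆ Ioc (x - b) (x + b) := by
    rintro t (⟨h₁, h₂⟩ | ⟨h₁, h₂⟩) <;> constructor <;> linarith [mem_Ici.1 ha]
  calc μ (Ioc (x - a) (x + a))
      < μ (Ioc (x - a) (x + a)) + μ (Ioo (x + a) (x + b)) :=
        ENNReal.lt_add_right measure_Ioc_lt_top.ne
          (isOpen_Ioo.measure_ne_zero μ (nonempty_Ioo.2 (by linarith)))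
    _ = μ (Ioc (x - a) (x + a) ∪ Ioo (x + a) (x + b)) :=
        (measure_union ((Ioc_disjoint_Ioc_of_le le_rfl).mono_right Ioo_subset_Ioc_self)
          measurableSet_Ioo).symm
    _ ≤ μ (Ioc (x - b) (x + b)) := measure_mono hsub

theorem tendsto_measure_Ioc_sub_add_atTop (x : ℝ) :
    Tendsto (fun r => μ (Ioc (x - r) (x + r))) atTop (𝓝 (μ univ)) := by
  have hmono : Monotone fun r : ℝ => Ioc (x - r) (x + r) := fun a b hab =>
    Ioc_subset_Ioc (by linarith) (by linarith)
  have hunion : ⋃ r : ℝ, Ioc (x - r) (x + r) = univ :=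
    eq_univ_of_forall fun t => mem_iUnion.2
      ⟨|t - x| + 1, by constructor <;> linarith [neg_abs_le (t - x), le_abs_self (t - x)]⟩
  have := tendsto_measure_iUnion_atTop (μ := μ) hmono
  rwa [hunion] at this

section Existence

variable [IsLocallyFiniteMeasure μ] [NullSingletonClass μ]

theorem continuousOn_measureReal_Ioc_sub_add (x : ℝ) :
    ContinuousOn (fun r => μ.real (Ioc (x - r) (x + r))) (Ici 0) := by
  have hprim := intervalIntegral.continuous_primitive (μ := μ) (f := fun _ => (1 : ℝ))
    (fun _ _ => intervalIntegrable_const) 0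
  have hcont : Continuous fun r => ∫ _ in (x - r)..(x + r), (1 : ℝ) ∂μ := by
    have hsplit : (fun r => ∫ _ in (x - r)..(x + r), (1 : ℝ) ∂μ) =
        fun r => (∫ _ in 0..(x + r), (1 : ℝ) ∂μ) - ∫ _ in 0..(x - r), (1 : ℝ) ∂μ :=
      funext fun r => (intervalIntegral.integral_interval_sub_left intervalIntegrable_const
        intervalIntegrable_const).symm
    rw [hsplit]
    exact (hprim.comp (continuous_const_add x)).sub (hprim.comp (continuous_sub_left x))
  refine hcont.continuousOn.congr fun r hr => ?_
  simp [intervalIntegral.integral_const',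
    Ioc_eq_empty_of_le (by linarith [mem_Ici.1 hr] : x - r ≤ x + r)]

theorem exists_pos_measure_Ioc_sub_add_eq (x : ℝ) {c : ℝ≥0∞} (hc₀ : 0 < c)
    (hc : c < μ univ) :
    ∃ r, 0 < r ∧ μ (Ioc (x - r) (x + r)) = c := by
  obtain ⟨R, hR, hR₀⟩ := (((tendsto_measure_Ioc_sub_add_atTop x).eventually
    (lt_mem_nhds hc)).and (eventually_ge_atTop 0)).exists
  have hc_top : c ≠ ⊤ := (hR.trans measure_Ioc_lt_top).ne
  obtain ⟨r, hr, hrc⟩ : c.toReal ∈ (fun r => μ.real (Ioc (x - r) (x + r))) '' Icc 0 R :=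
    intermediate_value_Icc hR₀
      ((continuousOn_measureReal_Ioc_sub_add x).mono Icc_subset_Ici_self)
      ⟨by simp, (ENNReal.toReal_le_toReal hc_top measure_Ioc_lt_top.ne).2 hR.le⟩
  have hrc' : μ (Ioc (x - r) (x + r)) = c :=
    (ENNReal.toReal_eq_toReal_iff' measure_Ioc_lt_top.ne hc_top).1 hrc
  refine ⟨r, hr.1.lt_of_ne ?_, hrc'⟩
  rintro rfl
  simp [hc₀.ne] at hrc'

end Existence

theorem lipschitzWith_one_of_measure_Ioc_sub_add_eq [IsLocallyFiniteMeasure μ]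
    [Measure.IsOpenPosMeasure μ] {s : ℝ → ℝ} {c : ℝ≥0∞} (hs₀ : ∀ x, 0 ≤ s x)
    (hs : ∀ x, μ (Ioc (x - s x) (x + s x)) = c) : LipschitzWith 1 s := by
  refine LipschitzWith.of_le_add fun y x => not_lt.1 fun hlt => ?_
  rw [Real.dist_eq] at hlt
  have hsub : Ioc (x - s x) (x + s x) ⊆ Ioc (y - (s x + |y - x|)) (y + (s x + |y - x|)) :=
    Ioc_subset_Ioc (by linarith [le_abs_self (y - x)]) (by linarith [neg_abs_le (y - x)])
  have := strictMonoOn_measure_Ioc_sub_add (μ := μ) y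
    (mem_Ici.2 (add_nonneg (hs₀ x) (abs_nonneg _))) (mem_Ici.2 (hs₀ y)) hlt
  exact (((hs x).symm.trans_le (measure_mono hsub)).trans_lt (this.trans_eq (hs y))).false

end MeasureTheory

theorem exists_unique_s_and_lipschitz_property_general
    (g : ℝ → ℝ≥0∞) (hg : Measurable g)
    (hpos : ∀ᵐ t ∂(volume : Measure ℝ), 0 < g t)
    (hloc : ∀ a b : ℝ, (∫⁻ t in Set.Icc a b, g t) < ⊤)
    (hbot : (∫⁻ t in Set.Iic (0:ℝ), g t) = ⊤) :
    ∃ s : ℝ → ℝ,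
      (∀ x : ℝ, (0 < s x ∧ (∫⁻ t in Set.Ioc (x - s x) (x + s x), g t) = 1) ∧
        ∀ s' : ℝ, 0 < s' → (∫⁻ t in Set.Ioc (x - s') (x + s'), g t) = 1 →
          s' = s x) ∧
      (∀ x t : ℝ, |t| ≤ s x → |s (x + t) - s x| ≤ |t|) ∧
      Continuous s := by
  set μ := volume.withDensity g
  have hμ (u : Set ℝ) (hu : MeasurableSet u) : μ u = ∫⁻ t in u, g t :=
    withDensity_apply g hu
  have : IsLocallyFiniteMeasure μ := ⟨fun x => ⟨Icc (x - 1) (x + 1),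
    Icc_mem_nhds (by linarith) (by linarith), by rw [hμ _ measurableSet_Icc]; exact hloc _ _⟩⟩
  have : Measure.IsOpenPosMeasure μ := (withDensity_absolutelyContinuous' hg.aemeasurable
    (hpos.mono fun _ h => h.ne')).isOpenPosMeasure
  have hμ_univ : μ univ = ⊤ :=
    top_unique (hbot ▸ hμ _ measurableSet_Iic ▸ measure_mono (subset_univ _))
  choose s hs_pos hs using fun x =>
    exists_pos_measure_Ioc_sub_add_eq (μ := μ) x one_pos (hμ_univ ▸ ENNReal.one_lt_top)
  have hlip : LipschitzWith 1 s :=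
    lipschitzWith_one_of_measure_Ioc_sub_add_eq (fun x => (hs_pos x).le) hs
  refine ⟨s, fun x => ⟨⟨hs_pos x, hμ _ measurableSet_Ioc ▸ hs x⟩, fun s' hs' h => ?_⟩,
    fun x t _ => ?_, hlip.continuous⟩
  · exact strictMonoOn_measure_Ioc_sub_add x |>.injOn hs'.le (hs_pos x).le
      (((hμ _ measurableSet_Ioc).trans h).trans (hs x).symm)
  · simpa [Real.dist_eq] using hlip.dist_le_mul (x + t) x

/-- **Lemma 2.10 / §6** (in the generality used in the paper).  Let
`g : ℝ → [0,∞]` be measurable, a.e. positive, locally integrable, with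
`∫_{-∞}^0 g = ∫_0^∞ g = ∞`.  Then for every `x` the equation
`∫_{x-s}^{x+s} g = 1` has a unique solution `s(x) ∈ (0,∞)`, and the function
`s` satisfies `|s(x+t) − s(x)| ≤ |t|` for `|t| ≤ s(x)`; in particular `s` is
continuous. -/
theorem exists_unique_s_and_lipschitz_property
    (g : ℝ → ℝ≥0∞) (hg : Measurable g)
    (hpos : ∀ᵐ t ∂(volume : Measure ℝ), 0 < g t)
    (hloc : ∀ a b : ℝ, (∫⁻ t in Set.Icc a b, g t) < ⊤)
    (hbot : (∫⁻ t in Set.Iic (0:ℝ), g t) = ⊤)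
    (htop : (∫⁻ t in Set.Ici (0:ℝ), g t) = ⊤) :
    ∃ s : ℝ → ℝ,
      (∀ x : ℝ, (0 < s x ∧ (∫⁻ t in Set.Ioc (x - s x) (x + s x), g t) = 1) ∧
        ∀ s' : ℝ, 0 < s' → (∫⁻ t in Set.Ioc (x - s') (x + s'), g t) = 1 →
          s' = s x) ∧
      (∀ x t : ℝ, |t| ≤ s x → |s (x + t) - s x| ≤ |t|) ∧
      Continuous s :=
  exists_unique_s_and_lipschitz_property_general g hg hpos hloc hbot
end
end

section
/- Assume conditions (1.2) and (2.1), let u, v be a principal fundamental system of solutions of (r z')' = q z with ρ = u·v, assume ∫_{-∞}^0 dt/(r(t)ρ(t)) = ∫_0^∞ dt/(r(t)ρ(t)) = ∞, and for each x ∈ ℝ let s(x) be the unique positive solution of ∫_{x-s(x)}^{x+s(x)} dt/(r(t) ρ(t)) = 1. Then for every x ∈ ℝ and every t with |t − x| ≤ s(x): e⁻¹ v(x) ≤ v(t) ≤ e v(x), e⁻¹ u(x) ≤ u(t) ≤ e u(x), and e⁻² ρ(x) ≤ ρ(t) ≤ e² ρ(x). -/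
open MeasureTheory Filter Topology
open scoped ENNReal RealInnerProductSpace

noncomputable section

/-!
Since `u, v > 0` are locally absolutely continuous, `log v(t) - log v(x) = ∫_x^t v'/v` and
`log u(x) - log u(t) = ∫_x^t (-u'/u)`. Both integrands are nonnegative and, by the Wronskian
identity `r (v' u - u' v) = 1`, they add up to `1/(rρ)`. Hence for `|t - x| ≤ s(x)` both
logarithmic increments are bounded in absolute value by `∫_{x-s(x)}^{x+s(x)} dt/(rρ) = 1`, the one
of `ρ = uv` by `2`, and exponentiating gives the claim.
-/

open Set
open scoped NNReal

theorem LipschitzOnWith.comp_absolutelyContinuousOnInterval {X Y : Type*} [PseudoMetricSpace X]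
    [PseudoMetricSpace Y] {g : X → Y} {K : ℝ≥0} {s : Set X} {f : ℝ → X} {a b : ℝ}
    (hg : LipschitzOnWith K g s) (hf : AbsolutelyContinuousOnInterval f a b)
    (hfs : MapsTo f (uIcc a b) s) : AbsolutelyContinuousOnInterval (g ∘ f) a b := by
  unfold AbsolutelyContinuousOnInterval at hf ⊢
  have hK := hf.const_mul (K : ℝ)
  rw [mul_zero] at hK
  refine squeeze_zero' (.of_forall fun E => Finset.sum_nonneg fun _ _ => dist_nonneg) ?_ hK
  filter_upwards [mem_inf_of_right (mem_principal_self _)] with E hE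
  rw [Finset.mul_sum]
  exact Finset.sum_le_sum fun i hi => hg.dist_le_mul _ (hfs (hE.1 i hi).1) _ (hfs (hE.1 i hi).2)

theorem Real.lipschitzOnWith_log_Ici {m : ℝ} (hm : 0 < m) :
    LipschitzOnWith (Real.toNNReal m⁻¹) Real.log (Ici m) := by
  refine (convex_Ici m).lipschitzOnWith_of_nnnorm_hasDerivWithin_le
    (fun x hx => (Real.hasDerivAt_log (hm.trans_le hx).ne').hasDerivWithinAt) fun x hx => ?_
  have hx0 : 0 < x := hm.trans_le hx
  rw [← NNReal.coe_le_coe, coe_nnnorm, Real.norm_eq_abs, abs_inv, abs_of_pos hx0,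
    Real.coe_toNNReal _ (inv_nonneg.2 hm.le)]
  exact inv_anti₀ hm hx

theorem AbsolutelyContinuousOnInterval.log {f : ℝ → ℝ} {a b : ℝ}
    (hf : AbsolutelyContinuousOnInterval f a b) (hpos : ∀ x ∈ uIcc a b, 0 < f x) :
    AbsolutelyContinuousOnInterval (fun x => Real.log (f x)) a b := by
  obtain ⟨c, hc, hmin⟩ := isCompact_uIcc.exists_isMinOn nonempty_uIcc hf.continuousOn
  exact (Real.lipschitzOnWith_log_Ici (hpos c hc)).comp_absolutelyContinuousOnInterval hf
    fun x hx => (hmin hx : f c ≤ f x)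

theorem log_sub_log_eq_integral_div {f f' : ℝ → ℝ} {a b : ℝ}
    (hf' : IntervalIntegrable f' volume a b) (hf : ∀ x, f x - f a = ∫ t in a..x, f' t)
    (hpos : ∀ x ∈ uIcc a b, 0 < f x) :
    Real.log (f b) - Real.log (f a) = ∫ t in a..b, f' t / f t := by
  have hfeq : f = fun x => f a + ∫ t in a..x, f' t := funext fun x => eq_add_of_sub_eq' (hf x)
  have hac : AbsolutelyContinuousOnInterval f a b := by
    rw [hfeq]
    exact (LipschitzWith.const (f a)).lipschitzOnWith.absolutelyContinuousOnInterval.add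
      (hf'.absolutelyContinuousOnInterval_intervalIntegral left_mem_uIcc)
  rw [← (hac.log hpos).integral_deriv_eq_sub]
  refine intervalIntegral.integral_congr_ae ?_
  filter_upwards [hf'.ae_hasDerivAt_integral] with x hx hxab
  have hxab' := uIoc_subset_uIcc hxab
  have hderiv : HasDerivAt f (f' x) x := by
    rw [hfeq]
    simpa using (hx hxab' a left_mem_uIcc).const_add (f a)
  exact (hderiv.log (hpos x hxab').ne').deriv

theorem abs_integral_le_integral_of_nonneg_of_le {w g : ℝ → ℝ} {a b c d : ℝ}
    (hw0 : ∀ t, 0 ≤ w t) (hwg : ∀ t, w t ≤ g t) (hw : IntervalIntegrable w volume a b)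
    (hg : IntervalIntegrable g volume c d) (ha : a ∈ Icc c d) (hb : b ∈ Icc c d) :
    |∫ t in a..b, w t| ≤ ∫ t in c..d, g t := by
  wlog hab : a ≤ b generalizing a b
  · rw [intervalIntegral.integral_symm, abs_neg]
    exact this hw.symm hb ha (le_of_not_ge hab)
  have hsub : uIcc a b ⊆ uIcc c d := uIcc_subset_uIcc (Icc_subset_uIcc ha) (Icc_subset_uIcc hb)
  calc |∫ t in a..b, w t| = ∫ t in a..b, w t :=
        abs_of_nonneg (intervalIntegral.integral_nonneg hab fun t _ => hw0 t)
    _ ≤ ∫ t in a..b, g t :=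
        intervalIntegral.integral_mono_on hab hw (hg.mono_set hsub) fun t _ => hwg t
    _ ≤ ∫ t in c..d, g t :=
        intervalIntegral.integral_mono_interval ha.1 hab hb.2
          (.of_forall fun t => (hw0 t).trans (hwg t)) hg

theorem mem_Icc_exp_mul_of_abs_log_sub_le {p q c : ℝ} (hp : 0 < p) (hq : 0 < q)
    (h : |Real.log p - Real.log q| ≤ c) : p ∈ Icc (Real.exp (-c) * q) (Real.exp c * q) := by
  obtain ⟨hlo, hhi⟩ := abs_le.1 h
  constructor
  · calc Real.exp (-c) * q = Real.exp (-c + Real.log q) := by rw [Real.exp_add, Real.exp_log hq]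
      _ ≤ Real.exp (Real.log p) := Real.exp_le_exp.2 (by linarith)
      _ = p := Real.exp_log hp
  · calc p = Real.exp (Real.log p) := (Real.exp_log hp).symm
      _ ≤ Real.exp (c + Real.log q) := Real.exp_le_exp.2 (by linarith)
      _ = Real.exp c * q := by rw [Real.exp_add, Real.exp_log hq]

theorem continuous_of_sub_eq_integral {f f' : ℝ → ℝ}
    (hf' : ∀ a b, IntervalIntegrable f' volume a b) (hf : ∀ x, f x - f 0 = ∫ t in 0..x, f' t) :
    Continuous f := by
  have hfeq : f = fun x => f 0 + ∫ t in 0..x, f' t := funext fun x => eq_add_of_sub_eq' (hf x)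
  rw [hfeq]
  exact continuous_const.add (intervalIntegral.continuous_primitive hf' 0)

namespace PFSS

variable {r q u v u' v' : ℝ → ℝ}

theorem continuous_u (h : PFSS r q u v u' v') : Continuous u :=
  continuous_of_sub_eq_integral h.u'_intble (h.u_deriv 0)

theorem continuous_v (h : PFSS r q u v u' v') : Continuous v :=
  continuous_of_sub_eq_integral h.v'_intble (h.v_deriv 0)

theorem intervalIntegrable_neg_u'_div_u (h : PFSS r q u v u' v') (a b : ℝ) :
    IntervalIntegrable (fun t => -u' t / u t) volume a b :=
  (h.u'_intble a b).neg.mul_continuousOn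
    (h.continuous_u.continuousOn.inv₀ fun t _ => (h.u_pos t).ne')

theorem intervalIntegrable_v'_div_v (h : PFSS r q u v u' v') (a b : ℝ) :
    IntervalIntegrable (fun t => v' t / v t) volume a b :=
  (h.v'_intble a b).mul_continuousOn
    (h.continuous_v.continuousOn.inv₀ fun t _ => (h.v_pos t).ne')

theorem one_div_r_mul_uv (h : PFSS r q u v u' v') (t : ℝ) :
    1 / (r t * (u t * v t)) = v' t / v t + -u' t / u t := by
  have hu := (h.u_pos t).ne'
  have hv := (h.v_pos t).ne'
  have hr : r t ≠ 0 := left_ne_zero_of_mul_eq_one (h.wronskian t)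
  rw [← h.wronskian t]
  field_simp
  ring

theorem intervalIntegrable_one_div_r_mul_uv (h : PFSS r q u v u' v') (a b : ℝ) :
    IntervalIntegrable (fun t => 1 / (r t * (u t * v t))) volume a b := by
  simp_rw [h.one_div_r_mul_uv]
  exact (h.intervalIntegrable_v'_div_v a b).add (h.intervalIntegrable_neg_u'_div_u a b)

theorem abs_log_v_sub_le (h : PFSS r q u v u' v') {a b c d : ℝ} (ha : a ∈ Icc c d)
    (hb : b ∈ Icc c d) :
    |Real.log (v b) - Real.log (v a)| ≤ ∫ t in c..d, 1 / (r t * (u t * v t)) := by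
  rw [log_sub_log_eq_integral_div (h.v'_intble a b) (h.v_deriv a) fun x _ => h.v_pos x]
  refine abs_integral_le_integral_of_nonneg_of_le
    (fun t => div_nonneg (h.v'_nonneg t) (h.v_pos t).le) (fun t => ?_)
    (h.intervalIntegrable_v'_div_v a b) (h.intervalIntegrable_one_div_r_mul_uv c d) ha hb
  rw [h.one_div_r_mul_uv]
  exact le_add_of_nonneg_right (div_nonneg (neg_nonneg.2 (h.u'_nonpos t)) (h.u_pos t).le)

theorem abs_log_u_sub_le (h : PFSS r q u v u' v') {a b c d : ℝ} (ha : a ∈ Icc c d)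
    (hb : b ∈ Icc c d) :
    |Real.log (u b) - Real.log (u a)| ≤ ∫ t in c..d, 1 / (r t * (u t * v t)) := by
  rw [log_sub_log_eq_integral_div (h.u'_intble a b) (h.u_deriv a) fun x _ => h.u_pos x,
    ← abs_neg, ← intervalIntegral.integral_neg]
  simp_rw [← neg_div]
  refine abs_integral_le_integral_of_nonneg_of_le
    (fun t => div_nonneg (neg_nonneg.2 (h.u'_nonpos t)) (h.u_pos t).le) (fun t => ?_)
    (h.intervalIntegrable_neg_u'_div_u a b) (h.intervalIntegrable_one_div_r_mul_uv c d) ha hb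
  rw [h.one_div_r_mul_uv]
  exact le_add_of_nonneg_left (div_nonneg (h.v'_nonneg t) (h.v_pos t).le)

end PFSS

theorem uv_rho_comparable_on_s_interval_general
    (r q u v u' v' s : ℝ → ℝ)
    (hfss : PFSS r q u v u' v')
    (hs : IsS r (fun x => u x * v x) s) :
    ∀ x t : ℝ, |t - x| ≤ s x →
      Real.exp (-1) * v x ≤ v t ∧ v t ≤ Real.exp 1 * v x ∧
      Real.exp (-1) * u x ≤ u t ∧ u t ≤ Real.exp 1 * u x ∧
      Real.exp (-2) * (u x * v x) ≤ u t * v t ∧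
        u t * v t ≤ Real.exp 2 * (u x * v x) := by
  intro x t hxt
  obtain ⟨hs0, hs1⟩ := hs x
  have hx : x ∈ Icc (x - s x) (x + s x) := ⟨by linarith, by linarith⟩
  have ht : t ∈ Icc (x - s x) (x + s x) := by
    obtain ⟨h1, h2⟩ := abs_le.1 hxt
    exact ⟨by linarith, by linarith⟩
  have hv := hfss.abs_log_v_sub_le hx ht
  have hu := hfss.abs_log_u_sub_le hx ht
  rw [hs1] at hv hu
  have hρ : |Real.log (u t * v t) - Real.log (u x * v x)| ≤ 2 := by
    rw [Real.log_mul (hfss.u_pos t).ne' (hfss.v_pos t).ne',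
      Real.log_mul (hfss.u_pos x).ne' (hfss.v_pos x).ne']
    calc _ = |(Real.log (u t) - Real.log (u x)) + (Real.log (v t) - Real.log (v x))| := by
          congr 1; ring
      _ ≤ 2 := (abs_add_le _ _).trans (by linarith)
  obtain ⟨hv₁, hv₂⟩ := mem_Icc_exp_mul_of_abs_log_sub_le (hfss.v_pos t) (hfss.v_pos x) hv
  obtain ⟨hu₁, hu₂⟩ := mem_Icc_exp_mul_of_abs_log_sub_le (hfss.u_pos t) (hfss.u_pos x) hu
  obtain ⟨hρ₁, hρ₂⟩ := mem_Icc_exp_mul_of_abs_log_sub_le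
    (mul_pos (hfss.u_pos t) (hfss.v_pos t)) (mul_pos (hfss.u_pos x) (hfss.v_pos x)) hρ
  exact ⟨hv₁, hv₂, hu₁, hu₂, hρ₁, hρ₂⟩

/-- **Lemma 2.17** (for the function `s`).  Assume (1.2), (2.1), let `u, v` be
a principal FSS with `ρ = u·v`, assume
`∫_{-∞}^0 dt/(rρ) = ∫_0^∞ dt/(rρ) = ∞`, and let `s > 0` solve
`∫_{x-s(x)}^{x+s(x)} dt/(rρ) = 1`.  Then for `|t − x| ≤ s(x)`:
`e⁻¹ v(x) ≤ v(t) ≤ e v(x)`, `e⁻¹ u(x) ≤ u(t) ≤ e u(x)` and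
`e⁻² ρ(x) ≤ ρ(t) ≤ e² ρ(x)`. -/
theorem uv_rho_comparable_on_s_interval
    (r q u v u' v' s : ℝ → ℝ)
    (h12 : Cond12 r q) (h21 : Cond21 q) (hfss : PFSS r q u v u' v')
    (hIic : (∫⁻ t in Set.Iic (0:ℝ), ENNReal.ofReal (1 / (r t * (u t * v t)))) = ⊤)
    (hIci : (∫⁻ t in Set.Ici (0:ℝ), ENNReal.ofReal (1 / (r t * (u t * v t)))) = ⊤)
    (hs : IsS r (fun x => u x * v x) s) :
    ∀ x t : ℝ, |t - x| ≤ s x →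
      Real.exp (-1) * v x ≤ v t ∧ v t ≤ Real.exp 1 * v x ∧
      Real.exp (-1) * u x ≤ u t ∧ u t ≤ Real.exp 1 * u x ∧
      Real.exp (-2) * (u x * v x) ≤ u t * v t ∧
        u t * v t ≤ Real.exp 2 * (u x * v x) :=
  uv_rho_comparable_on_s_interval_general r q u v u' v' s hfss hs
end
end
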